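/- arXiv:1909.11147 — 5 statements merged into one kernel-verified Lean document; each statement's English description precedes it below -/
import Mathlib

section
/- Let G be a finite simple graph on n ≥ 2 vertices and let k ≥ 2 be an even integer. For an integer t ≥ 1, let X_t denote the number of inter-component edges of G with respect to a random t-out subgraph of G, and let Y_t denote the number of inter-component edges of G with respect to a random expected t-out subgraph of G. Set p = n·(e^(−k/3) + e^(−k/8)) and assume p < 1, and set D = (p/(1−p))·(n choose 2). Then E[X_{2k}] − D ≤ E[Y_k] ≤ E[X_{k/2}] + D. -/
open Finset

variable {V : Type*}

/-- The set of legal choices of one vertex `v` in the random `k`-out model: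
`v` picks a set of exactly `min k (deg v)` of its neighbours. -/
abbrev kOutChoice [Fintype V] [DecidableEq V] (G : SimpleGraph V) [DecidableRel G.Adj]
    (k : ℕ) (v : V) :=
  {A : Finset V // A ⊆ G.neighborFinset v ∧ A.card = min k (G.degree v)}

/-- The sample space of the random `k`-out model: every vertex independently and
uniformly picks a legal choice; the uniform measure on this finite product space
is exactly the joint distribution of the vertices' independent uniform choices. -/
abbrev kOutSpace [Fintype V] [DecidableEq V] (G : SimpleGraph V) [DecidableRel G.Adj]
    (k : ℕ) :=
  ∀ v : V, kOutChoice G k v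

/-- The random `k`-out subgraph determined by an outcome `ω`: an edge is present
iff it was chosen by at least one of its endpoints. -/
def kOutGraph [Fintype V] [DecidableEq V] (G : SimpleGraph V) [DecidableRel G.Adj]
    (k : ℕ) (ω : kOutSpace G k) : SimpleGraph V :=
  SimpleGraph.fromRel (fun u v => v ∈ (ω u).1)

/-- The number of edges of `G` whose endpoints lie in different connected
components of `H` (the inter-component edges of `G` with respect to `H`). -/
noncomputable def interCompCount (G H : SimpleGraph V) : ℕ :=
  Set.ncard {e : Sym2 V | e ∈ G.edgeSet ∧ ∀ u v : V, e = s(u, v) → ¬ H.Reachable u v}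

/-- The expected number of inter-component edges of `G` with respect to a random
`k`-out subgraph of `G`: the average over the (uniform) finite sample space. -/
noncomputable def kOutExpect [Fintype V] [DecidableEq V] (G : SimpleGraph V)
    [DecidableRel G.Adj] (k : ℕ) : ℝ :=
  (∑ ω : kOutSpace G k, (interCompCount G (kOutGraph G k ω) : ℝ)) /
    (Fintype.card (kOutSpace G k) : ℝ)
/-- The directed edges of `G`: ordered pairs of adjacent vertices. -/
abbrev dirEdges (G : SimpleGraph V) := {p : V × V // G.Adj p.1 p.2}

/-- The sampling probability `min (1, k / deg u)` of a directed edge leaving `u`. -/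
noncomputable def expKOutProb [Fintype V] (G : SimpleGraph V) [DecidableRel G.Adj]
    (k : ℕ) (u : V) : ℝ :=
  min 1 ((k : ℝ) / (G.degree u : ℝ))

/-- The probability of the outcome `f` of the independent Bernoulli variables,
one for each directed edge of `G`. -/
noncomputable def expKOutWeight [Fintype V] (G : SimpleGraph V) [DecidableRel G.Adj]
    (k : ℕ) (f : dirEdges G → Bool) : ℝ :=
  ∏ e : dirEdges G, if f e then expKOutProb G k e.1.1 else 1 - expKOutProb G k e.1.1

/-- The random expected `k`-out subgraph determined by an outcome `f`: the edge
`{u,v}` is present iff it was sampled in at least one of its two directions. -/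
def expKOutGraph (G : SimpleGraph V) (k : ℕ) (f : dirEdges G → Bool) : SimpleGraph V :=
  SimpleGraph.fromRel (fun u v => ∃ h : G.Adj u v, f ⟨(u, v), h⟩)

/-- The expected number of inter-component edges of `G` with respect to a random
expected `k`-out subgraph of `G`. -/
noncomputable def expKOutExpect [Fintype V] [DecidableEq V] (G : SimpleGraph V)
    [DecidableRel G.Adj] (k : ℕ) : ℝ :=
  ∑ f : dirEdges G → Bool,
    expKOutWeight G k f * (interCompCount G (expKOutGraph G k f) : ℝ)

/-!
In the expected `k`-out model the number of edges sampled at `u` is binomial with mean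
`min k (deg u)`, and conditioned on these numbers the sampled neighbourhoods are uniform, exactly
as in the `k`-out model with those neighbourhood sizes. Enlarging neighbourhoods only merges
components, so a double count shows that the average number of inter-component edges decreases
as the sizes grow. A Chernoff bound makes a size below `k / 2` (resp. above `2k`) at a given
vertex have probability at most `e^{-k/8}` (resp. `e^{-k/3}`); outside the union of these events
the expected model is compared with the `k/2`-out (resp. `2k`-out) model, and the union itself
costs at most `n e^{-k/8}` (resp. `n e^{-k/3}`) times the trivial bound `C(n, 2)`.
-/

namespace Finset

variable {ι : Type*}

theorem prod_ite_mem_of_subset {M : Type*} [DecidableEq ι] [CommMonoid M]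
    {s t : Finset ι} (h : t ⊆ s) (a b : M) :
    ∏ i ∈ s, (if i ∈ t then a else b) = a ^ #t * b ^ (#s - #t) := by
  rw [prod_ite, filter_mem_eq_inter, inter_eq_right.2 h, filter_not, filter_mem_eq_inter,
    inter_eq_right.2 h, prod_const, prod_const, card_sdiff_of_subset h]

-- Markov's inequality for the weights `w` and the moment `∑ a ^ j * w j`.
theorem sum_filter_le_sum_pow_mul_div (s : Finset ℕ) (P : ℕ → Prop) [DecidablePred P]
    {w : ℕ → ℝ} {a c : ℝ} (hw : ∀ j ∈ s, 0 ≤ w j) (ha : 0 ≤ a) (hc : 0 < c)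
    (hP : ∀ j ∈ s, P j → c ≤ a ^ j) :
    ∑ j ∈ s with P j, w j ≤ (∑ j ∈ s, a ^ j * w j) / c := by
  rw [le_div_iff₀ hc, sum_mul]
  calc ∑ j ∈ s with P j, w j * c ≤ ∑ j ∈ s with P j, a ^ j * w j :=
        sum_le_sum fun j hj => by
          rw [mem_filter] at hj
          nlinarith [hw j hj.1, hP j hj.1 hj.2]
    _ ≤ ∑ j ∈ s, a ^ j * w j :=
        sum_le_sum_of_subset_of_nonneg (filter_subset _ _) fun j hj _ =>
          mul_nonneg (pow_nonneg ha j) (hw j hj)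

theorem sum_mul_le_add_mul_of_le_outside {s : Finset ι} (bad : ι → Prop) [DecidablePred bad]
    {P f : ι → ℝ} {c M ε : ℝ} (hP : ∀ i ∈ s, 0 ≤ P i) (hP1 : ∑ i ∈ s, P i = 1)
    (hc : 0 ≤ c) (hfM : ∀ i ∈ s, f i ≤ M) (hfc : ∀ i ∈ s, ¬ bad i → f i ≤ c)
    (hbad : ∑ i ∈ s with bad i, P i ≤ ε) (hM : 0 ≤ M) :
    ∑ i ∈ s, P i * f i ≤ c + ε * M := by
  calc ∑ i ∈ s, P i * f i ≤ ∑ i ∈ s, P i * (c + if bad i then M else 0) :=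
        sum_le_sum fun i hi => mul_le_mul_of_nonneg_left (by
          split_ifs with h
          · linarith [hfM i hi]
          · linarith [hfc i hi h]) (hP i hi)
    _ = c + (∑ i ∈ s with bad i, P i) * M := by
        simp only [mul_add, sum_add_distrib, ← sum_mul, hP1, one_mul, mul_ite, mul_zero,
          sum_ite, sum_const_zero, add_zero]
    _ ≤ c + ε * M := by gcongr

theorem sub_mul_le_sum_mul_of_le_outside {s : Finset ι} (bad : ι → Prop) [DecidablePred bad]
    {P f : ι → ℝ} {c M ε : ℝ} (hP : ∀ i ∈ s, 0 ≤ P i) (hP1 : ∑ i ∈ s, P i = 1)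
    (hcM : c ≤ M) (hf : ∀ i ∈ s, 0 ≤ f i) (hfc : ∀ i ∈ s, ¬ bad i → c ≤ f i)
    (hbad : ∑ i ∈ s with bad i, P i ≤ ε) (hM : 0 ≤ M) :
    c - ε * M ≤ ∑ i ∈ s, P i * f i := by
  calc c - ε * M ≤ c - (∑ i ∈ s with bad i, P i) * M := by gcongr
    _ = ∑ i ∈ s, P i * (c - if bad i then M else 0) := by
        simp only [mul_sub, sum_sub_distrib, ← sum_mul, hP1, one_mul, mul_ite, mul_zero,
          sum_ite, sum_const_zero, add_zero]
    _ ≤ ∑ i ∈ s, P i * f i :=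
        sum_le_sum fun i hi => mul_le_mul_of_nonneg_left (by
          split_ifs with h
          · linarith [hf i hi]
          · linarith [hfc i hi h]) (hP i hi)

theorem div_card_le_div_card_of_biregular {α β : Type*} {s : Finset α} {t : Finset β}
    (r : α → β → Prop) [∀ a b, Decidable (r a b)] {m n : ℕ} {f : α → ℝ} {g : β → ℝ}
    (hm : ∀ a ∈ s, #(t.bipartiteAbove r a) = m)
    (hn : ∀ b ∈ t, #(s.bipartiteBelow r b) = n)
    (hn0 : 0 < n) (ht : t.Nonempty) (hgf : ∀ a ∈ s, ∀ b ∈ t, r a b → g b ≤ f a) :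
    (∑ b ∈ t, g b) / #t ≤ (∑ a ∈ s, f a) / #s := by
  have hcard : (#s * m : ℝ) = #t * n := by exact_mod_cast card_mul_eq_card_mul r hm hn
  have hsum : n * ∑ b ∈ t, g b ≤ m * ∑ a ∈ s, f a := by
    calc n * ∑ b ∈ t, g b = ∑ b ∈ t, ∑ a ∈ s.bipartiteBelow r b, g b := by
          rw [mul_sum]
          exact sum_congr rfl fun b hb => by rw [sum_const, hn b hb, nsmul_eq_mul]
      _ ≤ ∑ b ∈ t, ∑ a ∈ s.bipartiteBelow r b, f a :=
          sum_le_sum fun b hb => sum_le_sum fun a ha => by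
            rw [mem_bipartiteBelow] at ha
            exact hgf a ha.1 b hb ha.2
      _ = m * ∑ a ∈ s, f a := by
          rw [← sum_sum_bipartiteAbove_eq_sum_sum_bipartiteBelow, mul_sum]
          exact sum_congr rfl fun a ha => by rw [sum_const, hm a ha, nsmul_eq_mul]
  have htpos : (0 : ℝ) < #t := by exact_mod_cast ht.card_pos
  have hspos : (0 : ℝ) < #s := by
    have : (0 : ℝ) < #t * n := by positivity
    rw [← hcard] at this
    exact pos_of_mul_pos_left this (by positivity)
  have hn0' : (0 : ℝ) < n := by exact_mod_cast hn0
  rw [div_le_div_iff₀ htpos hspos]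
  refine le_of_mul_le_mul_left ?_ hn0'
  calc n * ((∑ b ∈ t, g b) * #s) = (n * ∑ b ∈ t, g b) * #s := by ring
    _ ≤ (m * ∑ a ∈ s, f a) * #s := by gcongr
    _ = (∑ a ∈ s, f a) * (#s * m) := by ring
    _ = n * ((∑ a ∈ s, f a) * #t) := by rw [hcard]; ring

section UnionBound

variable {κ : Type*} [Fintype ι] [DecidableEq ι]

theorem sum_piFinset_filter_prod_eq {t : ι → Finset κ} {w : ι → κ → ℝ}
    (hw1 : ∀ i, ∑ j ∈ t i, w i j = 1) (i : ι) (E : κ → Prop) [DecidablePred E] :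
    ∑ x ∈ Fintype.piFinset t with E (x i), ∏ k, w k (x k) =
      ∑ j ∈ t i with E j, w i j := by
  have hfilter : {x ∈ Fintype.piFinset t | E (x i)} =
      Fintype.piFinset (Function.update t i {j ∈ t i | E j}) := by
    ext x
    simp only [mem_filter, Fintype.mem_piFinset, Function.update_apply]
    constructor
    · rintro ⟨hx, hE⟩ k
      split_ifs with hk
      · subst hk; exact mem_filter.2 ⟨hx k, hE⟩
      · exact hx k
    · intro hx
      have hxi := hx i
      rw [if_pos rfl, mem_filter] at hxi
      refine ⟨fun k => ?_, hxi.2⟩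
      by_cases hk : k = i
      · subst hk; exact hxi.1
      · simpa [hk] using hx k
  rw [hfilter, ← prod_univ_sum, prod_eq_single i (fun k _ hk => by
    rw [Function.update_of_ne hk, hw1]) (fun h => absurd (mem_univ i) h),
    Function.update_self]

theorem sum_piFinset_filter_exists_prod_le {t : ι → Finset κ} {w : ι → κ → ℝ}
    (hw : ∀ i, ∀ j ∈ t i, 0 ≤ w i j) (hw1 : ∀ i, ∑ j ∈ t i, w i j = 1)
    (E : ι → κ → Prop) [∀ i, DecidablePred (E i)] :
    ∑ x ∈ Fintype.piFinset t with ∃ i, E i (x i), ∏ k, w k (x k) ≤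
      ∑ i, ∑ j ∈ t i with E i j, w i j := by
  calc ∑ x ∈ Fintype.piFinset t with ∃ i, E i (x i), ∏ k, w k (x k)
      ≤ ∑ x ∈ Fintype.piFinset t, ∑ i, if E i (x i) then ∏ k, w k (x k) else 0 := by
        rw [sum_filter]
        refine sum_le_sum fun x hx => ?_
        have hprod : 0 ≤ ∏ k, w k (x k) :=
          prod_nonneg fun k _ => hw k (x k) (Fintype.mem_piFinset.1 hx k)
        split_ifs with h
        · obtain ⟨i, hi⟩ := h
          refine le_trans (le_of_eq (if_pos hi).symm) (single_le_sum (f := fun i =>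
            if E i (x i) then ∏ k, w k (x k) else 0) (fun i _ => ite_nonneg hprod le_rfl)
            (mem_univ i))
        · exact sum_nonneg fun i _ => ite_nonneg hprod le_rfl
    _ = ∑ i, ∑ j ∈ t i with E i j, w i j := by
        rw [sum_comm]
        exact sum_congr rfl fun i _ => by
          rw [← sum_filter, sum_piFinset_filter_prod_eq hw1 i (E i)]

end UnionBound

end Finset

noncomputable def binomWeight (d : ℕ) (q : ℝ) (j : ℕ) : ℝ :=
  q ^ j * (1 - q) ^ (d - j) * d.choose j

section Binomial

variable {d : ℕ} {q : ℝ}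

theorem binomWeight_nonneg (hq0 : 0 ≤ q) (hq1 : q ≤ 1) (j : ℕ) : 0 ≤ binomWeight d q j := by
  have : 0 ≤ 1 - q := sub_nonneg.2 hq1
  unfold binomWeight
  positivity

theorem sum_pow_mul_binomWeight (d : ℕ) (q a : ℝ) :
    ∑ j ∈ range (d + 1), a ^ j * binomWeight d q j = (a * q + (1 - q)) ^ d := by
  rw [add_pow]
  exact sum_congr rfl fun j _ => by unfold binomWeight; ring

theorem sum_binomWeight (d : ℕ) (q : ℝ) : ∑ j ∈ range (d + 1), binomWeight d q j = 1 := by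
  simpa using sum_pow_mul_binomWeight d q 1

theorem sum_pow_mul_binomWeight_le_exp {a : ℝ} (ha : 0 ≤ a) (hq0 : 0 ≤ q) (hq1 : q ≤ 1) :
    ∑ j ∈ range (d + 1), a ^ j * binomWeight d q j ≤ Real.exp ((a - 1) * (q * d)) := by
  rw [sum_pow_mul_binomWeight, show (a - 1) * (q * d) = d * ((a - 1) * q) by ring,
    Real.exp_nat_mul]
  refine pow_le_pow_left₀ (by nlinarith) ?_ d
  linarith [Real.add_one_le_exp ((a - 1) * q)]

theorem sum_binomWeight_filter_two_mul_lt_le (hq0 : 0 ≤ q) (hq1 : q ≤ 1) (m : ℕ) :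
    ∑ j ∈ range (d + 1) with 2 * m < j, binomWeight d q j ≤ Real.exp (q * d) / 4 ^ m := by
  refine (sum_filter_le_sum_pow_mul_div _ _ (fun j _ => binomWeight_nonneg hq0 hq1 j)
    (c := 4 ^ m) zero_le_two (by positivity) fun j _ hj => ?_).trans ?_
  · calc (4 : ℝ) ^ m = 2 ^ (2 * m) := by rw [pow_mul]; norm_num
      _ ≤ 2 ^ j := pow_le_pow_right₀ one_le_two hj.le
  · gcongr
    exact (sum_pow_mul_binomWeight_le_exp zero_le_two hq0 hq1).trans_eq
      (congrArg Real.exp (by ring))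

theorem sum_binomWeight_filter_lt_le (hq0 : 0 ≤ q) (hq1 : q ≤ 1) (m : ℕ) :
    ∑ j ∈ range (d + 1) with j < m, binomWeight d q j ≤ 2 ^ m * Real.exp (-(q * d) / 2) := by
  refine (sum_filter_le_sum_pow_mul_div _ _ (fun j _ => binomWeight_nonneg hq0 hq1 j)
    (a := 2⁻¹) (c := 2⁻¹ ^ m) (by norm_num) (by positivity) fun j _ hj =>
      pow_le_pow_of_le_one (by norm_num) (by norm_num) hj.le).trans ?_
  rw [inv_pow, div_inv_eq_mul, mul_comm]
  gcongr
  exact (sum_pow_mul_binomWeight_le_exp (by norm_num) hq0 hq1).trans_eq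
    (congrArg Real.exp (by ring))

end Binomial

theorem exp_div_four_pow_le (k : ℕ) : Real.exp k / 4 ^ k ≤ Real.exp (-k / 3) := by
  have h4 : (4 : ℝ) ^ k = Real.exp (k * (2 * Real.log 2)) := by
    rw [Real.exp_nat_mul, two_mul, Real.exp_add, Real.exp_log two_pos]
    norm_num
  rw [h4, div_eq_mul_inv, ← Real.exp_neg, ← Real.exp_add, Real.exp_le_exp]
  have := Real.log_two_gt_d9
  have hk : (0 : ℝ) ≤ k := k.cast_nonneg
  nlinarith

theorem two_pow_div_two_mul_exp_le (k : ℕ) :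
    2 ^ (k / 2) * Real.exp (-k / 2) ≤ Real.exp (-k / 8) := by
  have hhalf : ((k / 2 : ℕ) : ℝ) ≤ k / 2 := Nat.cast_div_le
  rw [← Real.exp_log (by positivity : (0 : ℝ) < 2 ^ (k / 2)), Real.log_pow, ← Real.exp_add,
    Real.exp_le_exp]
  have := Real.log_two_lt_d9
  nlinarith [mul_le_mul_of_nonneg_right hhalf (Real.log_pos one_lt_two).le]

theorem min_one_div_eq_div {d k : ℕ} (hkd : k ≤ d) :
    min 1 ((k : ℝ) / d) = k / d :=
  min_eq_right (div_le_one_of_le₀ (by exact_mod_cast hkd) d.cast_nonneg)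

theorem sum_binomWeight_upper_tail_le (d k : ℕ) :
    ∑ j ∈ range (d + 1) with min (2 * k) d < j, binomWeight d (min 1 ((k : ℝ) / d)) j ≤
      Real.exp (-(k : ℝ) / 3) := by
  rcases le_or_gt d (2 * k) with hd | hd
  · rw [filter_false_of_mem fun j hj => by rw [mem_range] at hj; omega, sum_empty]
    exact (Real.exp_pos _).le
  have hd0 : (d : ℝ) ≠ 0 := Nat.cast_ne_zero.2 (by omega)
  rw [min_eq_left hd.le, min_one_div_eq_div (by omega)]
  calc _ ≤ Real.exp (k / d * d) / 4 ^ k :=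
        sum_binomWeight_filter_two_mul_lt_le (by positivity)
          (div_le_one_of_le₀ (by exact_mod_cast (by omega : k ≤ d)) d.cast_nonneg) k
    _ = Real.exp k / 4 ^ k := by rw [div_mul_cancel₀ _ hd0]
    _ ≤ Real.exp (-(k : ℝ) / 3) := exp_div_four_pow_le k

theorem sum_binomWeight_lower_tail_le (d k : ℕ) :
    ∑ j ∈ range (d + 1) with j < min (k / 2) d, binomWeight d (min 1 ((k : ℝ) / d)) j ≤
      Real.exp (-(k : ℝ) / 8) := by
  rcases le_or_gt d k with hd | hd
  · -- for `d ≤ k` every edge is sampled: the success probability is `1`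
    refine (sum_eq_zero fun j hj => ?_).trans_le (Real.exp_pos _).le
    have hjd : j < d := (mem_filter.1 hj).2.trans_le (min_le_right _ _)
    have hq : min 1 ((k : ℝ) / d) = 1 :=
      min_eq_left ((one_le_div (by exact_mod_cast (by omega : 0 < d))).2 (by exact_mod_cast hd))
    rw [hq, binomWeight, sub_self, zero_pow (by omega), mul_zero, zero_mul]
  have hd0 : (d : ℝ) ≠ 0 := Nat.cast_ne_zero.2 (by omega)
  rw [min_eq_left (by omega), min_one_div_eq_div hd.le]
  calc _ ≤ 2 ^ (k / 2) * Real.exp (-(k / d * d) / 2) :=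
        sum_binomWeight_filter_lt_le (by positivity)
          (div_le_one_of_le₀ (by exact_mod_cast hd.le) d.cast_nonneg) _
    _ = 2 ^ (k / 2) * Real.exp (-k / 2) := by rw [div_mul_cancel₀ _ hd0]
    _ ≤ Real.exp (-(k : ℝ) / 8) := two_pow_div_two_mul_exp_le k

def selectionGraph (A : V → Finset V) : SimpleGraph V :=
  SimpleGraph.fromRel fun u v => v ∈ A u

theorem selectionGraph_mono {A B : V → Finset V} (h : ∀ u, A u ⊆ B u) :
    selectionGraph A ≤ selectionGraph B := by
  intro u v huv
  rw [selectionGraph, SimpleGraph.fromRel_adj] at huv ⊢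
  exact ⟨huv.1, huv.2.imp (fun hv => h u hv) (fun hu => h v hu)⟩

theorem interCompCount_anti [Finite V] (G : SimpleGraph V) {H H' : SimpleGraph V}
    (h : H ≤ H') : interCompCount G H' ≤ interCompCount G H :=
  Set.ncard_le_ncard (fun _ he => ⟨he.1, fun u v huv hr => he.2 u v huv (hr.mono h)⟩)
    (Set.toFinite _)

theorem interCompCount_le_choose [Fintype V] [DecidableEq V] (G : SimpleGraph V)
    [DecidableRel G.Adj] (H : SimpleGraph V) :
    interCompCount G H ≤ (Fintype.card V).choose 2 := by
  calc interCompCount G H ≤ (G.edgeFinset : Set (Sym2 V)).ncard := by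
        rw [SimpleGraph.coe_edgeFinset]
        exact Set.ncard_le_ncard (fun _ he => he.1) (Set.toFinite _)
    _ ≤ (Fintype.card V).choose 2 := by
        rw [Set.ncard_coe_finset]
        exact G.card_edgeFinset_le_card_choose_two

section Selections

variable [Fintype V] [DecidableEq V] (G : SimpleGraph V) [DecidableRel G.Adj]

def selections (s : V → ℕ) : Finset (V → Finset V) :=
  Fintype.piFinset fun u => (G.neighborFinset u).powersetCard (s u)

noncomputable def avgInterComp (s : V → ℕ) : ℝ :=
  (∑ A ∈ selections G s, (interCompCount G (selectionGraph A) : ℝ)) / #(selections G s)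

variable {G}

theorem mem_selections {s : V → ℕ} {A : V → Finset V} :
    A ∈ selections G s ↔ ∀ u, A u ⊆ G.neighborFinset u ∧ #(A u) = s u := by
  simp only [selections, Fintype.mem_piFinset, mem_powersetCard]

theorem card_selections (s : V → ℕ) : #(selections G s) = ∏ u, (G.degree u).choose (s u) := by
  simp only [selections, Fintype.card_piFinset, card_powersetCard,
    SimpleGraph.card_neighborFinset_eq_degree]

theorem avgInterComp_nonneg (s : V → ℕ) : 0 ≤ avgInterComp G s := by
  unfold avgInterComp
  positivity

theorem avgInterComp_le_choose (s : V → ℕ) :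
    avgInterComp G s ≤ (Fintype.card V).choose 2 := by
  refine div_le_of_le_mul₀ (Nat.cast_nonneg _) (Nat.cast_nonneg _) ?_
  rw [mul_comm, ← nsmul_eq_mul]
  exact sum_le_card_nsmul _ _ _ fun A _ => by exact_mod_cast interCompCount_le_choose G _

theorem card_selections_filter_subset {s s' : V → ℕ} {A : V → Finset V}
    (hA : A ∈ selections G s') :
    #{B ∈ selections G s | ∀ u, B u ⊆ A u} = ∏ u, (s' u).choose (s u) := by
  rw [mem_selections] at hA
  have : {B ∈ selections G s | ∀ u, B u ⊆ A u} =
      Fintype.piFinset fun u => (A u).powersetCard (s u) := by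
    ext B
    simp only [mem_filter, mem_selections, Fintype.mem_piFinset, mem_powersetCard]
    exact ⟨fun h u => ⟨h.2 u, (h.1 u).2⟩,
      fun h => ⟨fun u => ⟨(h u).1.trans (hA u).1, (h u).2⟩, fun u => (h u).1⟩⟩
  simp only [this, Fintype.card_piFinset, card_powersetCard, (hA _).2]

theorem card_selections_filter_superset {s s' : V → ℕ} (hss' : ∀ u, s u ≤ s' u)
    {B : V → Finset V} (hB : B ∈ selections G s) :
    #{A ∈ selections G s' | ∀ u, B u ⊆ A u} =
      ∏ u, (G.degree u - s u).choose (s' u - s u) := by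
  rw [mem_selections] at hB
  have : {A ∈ selections G s' | ∀ u, B u ⊆ A u} =
      Fintype.piFinset fun u => ((G.neighborFinset u).powersetCard (s' u)).filter (B u ⊆ ·) := by
    ext A
    simp only [mem_filter, selections, Fintype.mem_piFinset]
    exact ⟨fun h u => ⟨h.1 u, h.2 u⟩, fun h => ⟨fun u => (h u).1, fun u => (h u).2⟩⟩
  rw [this, Fintype.card_piFinset]
  refine prod_congr rfl fun u _ => ?_
  rw [card_filter_powersetCard_subset _ _ _ (hB u).1 ((hB u).2.trans_le (hss' u)), (hB u).2,
    SimpleGraph.card_neighborFinset_eq_degree]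

theorem avgInterComp_anti {s s' : V → ℕ} (hss' : ∀ u, s u ≤ s' u)
    (hs' : ∀ u, s' u ≤ G.degree u) : avgInterComp G s' ≤ avgInterComp G s := by
  unfold avgInterComp
  refine div_card_le_div_card_of_biregular (fun B A : V → Finset V => ∀ u, B u ⊆ A u)
    (fun B hB => card_selections_filter_superset hss' hB)
    (fun A hA => card_selections_filter_subset hA)
    (prod_pos fun u _ => Nat.choose_pos (hss' u)) ?_
    fun B _ A _ hBA => by exact_mod_cast interCompCount_anti G (selectionGraph_mono hBA)
  rw [← card_pos, card_selections]
  exact prod_pos fun u _ => Nat.choose_pos (hs' u)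

end Selections

section KOutModel

variable [Fintype V] [DecidableEq V] {G : SimpleGraph V} [DecidableRel G.Adj]

theorem sum_kOutSpace_eq_sum_selections (t : ℕ) (g : (V → Finset V) → ℝ) :
    ∑ ω : kOutSpace G t, g (fun u => (ω u).1) =
      ∑ A ∈ selections G (fun u => min t (G.degree u)), g A := by
  refine sum_bij' (fun ω _ u => (ω u).1)
    (fun A hA u => ⟨A u, (mem_selections.1 hA u).1, (mem_selections.1 hA u).2⟩)
    (fun ω _ => mem_selections.2 fun u => (ω u).2) (fun _ _ => mem_univ _)
    (fun _ _ => rfl) (fun _ _ => rfl) (fun _ _ => rfl)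

theorem kOutExpect_eq_avgInterComp (t : ℕ) :
    kOutExpect G t = avgInterComp G (fun u => min t (G.degree u)) := by
  have hcard := sum_kOutSpace_eq_sum_selections (G := G) t fun _ => 1
  simp only [sum_const, card_univ, nsmul_eq_mul, mul_one] at hcard
  rw [kOutExpect, avgInterComp, hcard]
  exact congrArg (· / _)
    (sum_kOutSpace_eq_sum_selections t fun A => (interCompCount G (selectionGraph A) : ℝ))

end KOutModel

section ExpectedModel

variable [Fintype V] [DecidableEq V] {G : SimpleGraph V} [DecidableRel G.Adj]

theorem expKOutWeight_decide_mem (k : ℕ) {A : V → Finset V}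
    (hA : ∀ u, A u ⊆ G.neighborFinset u) :
    expKOutWeight G k (fun e => decide (e.1.2 ∈ A e.1.1)) =
      ∏ u, expKOutProb G k u ^ #(A u) * (1 - expKOutProb G k u) ^ (G.degree u - #(A u)) := by
  set h : V × V → ℝ := fun p => if p.2 ∈ A p.1 then expKOutProb G k p.1
    else 1 - expKOutProb G k p.1
  calc expKOutWeight G k (fun e => decide (e.1.2 ∈ A e.1.1))
      = ∏ e : dirEdges G, h e.1 := by simp only [expKOutWeight, decide_eq_true_eq, h]
    _ = ∏ u, ∏ v ∈ G.neighborFinset u, h (u, v) := by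
        rw [← prod_subtype {p | G.Adj p.1 p.2} (by simp) h, prod_filter,
          Fintype.prod_prod_type]
        simp only [SimpleGraph.neighborFinset_eq_filter, prod_filter]
    _ = _ := prod_congr rfl fun u _ => by
        simp only [h]
        rw [prod_ite_mem_of_subset (hA u), SimpleGraph.card_neighborFinset_eq_degree]

theorem expKOutGraph_decide_mem (k : ℕ) {A : V → Finset V}
    (hA : ∀ u, A u ⊆ G.neighborFinset u) :
    expKOutGraph G k (fun e => decide (e.1.2 ∈ A e.1.1)) = selectionGraph A := by
  ext u v
  simp only [expKOutGraph, selectionGraph, SimpleGraph.fromRel_adj, decide_eq_true_eq]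
  refine and_congr_right fun _ => or_congr ?_ ?_
  · exact ⟨fun ⟨_, h⟩ => h, fun h => ⟨(G.mem_neighborFinset _ _).1 (hA u h), h⟩⟩
  · exact ⟨fun ⟨_, h⟩ => h, fun h => ⟨(G.mem_neighborFinset _ _).1 (hA v h), h⟩⟩

-- An outcome of the Bernoulli variables is the same as the family `A` of sampled neighbourhoods.
theorem expKOutExpect_eq_sum_subsets (k : ℕ) :
    expKOutExpect G k = ∑ A ∈ Fintype.piFinset fun u => (G.neighborFinset u).powerset,
      (∏ u, expKOutProb G k u ^ #(A u) * (1 - expKOutProb G k u) ^ (G.degree u - #(A u))) *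
        interCompCount G (selectionGraph A) := by
  symm
  refine sum_bij' (fun A _ e => decide (e.1.2 ∈ A e.1.1))
    (fun f _ u => {v ∈ G.neighborFinset u | ∃ h : G.Adj u v, f ⟨(u, v), h⟩})
    (fun _ _ => mem_univ _)
    (fun f _ => Fintype.mem_piFinset.2 fun u => mem_powerset.2 (filter_subset _ _))
    (fun A hA => ?_) (fun f _ => ?_) (fun A hA => ?_)
  · have hA := fun u => mem_powerset.1 (Fintype.mem_piFinset.1 hA u)
    ext u v
    simp only [mem_filter, decide_eq_true_eq, SimpleGraph.mem_neighborFinset]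
    exact ⟨fun h => h.2.2, fun h =>
      have hv := (G.mem_neighborFinset _ _).1 (hA u h); ⟨hv, hv, h⟩⟩
  · funext ⟨⟨u, v⟩, h⟩
    simp [h]
  · have hA := fun u => mem_powerset.1 (Fintype.mem_piFinset.1 hA u)
    rw [expKOutWeight_decide_mem k hA, expKOutGraph_decide_mem k hA]

end ExpectedModel

theorem expKOutProb_nonneg [Fintype V] {G : SimpleGraph V} [DecidableRel G.Adj] (k : ℕ)
    (u : V) : 0 ≤ expKOutProb G k u :=
  le_min zero_le_one (by positivity)

theorem expKOutProb_le_one [Fintype V] {G : SimpleGraph V} [DecidableRel G.Adj] (k : ℕ)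
    (u : V) : expKOutProb G k u ≤ 1 :=
  min_le_left _ _

noncomputable def sizeWeight [Fintype V] (G : SimpleGraph V) [DecidableRel G.Adj] (k : ℕ)
    (s : V → ℕ) : ℝ :=
  ∏ u, binomWeight (G.degree u) (expKOutProb G k u) (s u)

theorem sizeWeight_nonneg [Fintype V] {G : SimpleGraph V} [DecidableRel G.Adj] (k : ℕ)
    (s : V → ℕ) : 0 ≤ sizeWeight G k s :=
  prod_nonneg fun u _ =>
    binomWeight_nonneg (expKOutProb_nonneg k u) (expKOutProb_le_one k u) (s u)

section SizeVectors

variable [Fintype V] [DecidableEq V] (G : SimpleGraph V) [DecidableRel G.Adj]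

def sizeVectors : Finset (V → ℕ) :=
  Fintype.piFinset fun u => range (G.degree u + 1)

variable {G}

theorem le_degree_of_mem_sizeVectors {s : V → ℕ} (hs : s ∈ sizeVectors G) (u : V) :
    s u ≤ G.degree u :=
  Nat.lt_succ_iff.1 (mem_range.1 (Fintype.mem_piFinset.1 hs u))

theorem sum_sizeWeight (k : ℕ) : ∑ s ∈ sizeVectors G, sizeWeight G k s = 1 := by
  simp only [sizeVectors, sizeWeight]
  rw [← prod_univ_sum]
  exact prod_eq_one fun u _ => sum_binomWeight _ _

-- Conditioned on the sizes `s u = #(A u)`, the sampled neighbourhoods `A u` are uniform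
-- selections of those sizes.
theorem expKOutExpect_eq_sum_sizeWeight_mul (k : ℕ) :
    expKOutExpect G k = ∑ s ∈ sizeVectors G, sizeWeight G k s * avgInterComp G s := by
  rw [expKOutExpect_eq_sum_subsets, ← sum_fiberwise_of_maps_to (g := fun A u => #(A u))
    (t := sizeVectors G) fun A hA => Fintype.mem_piFinset.2 fun u => mem_range.2 <|
      Nat.lt_succ_of_le <| (card_le_card (mem_powerset.1 (Fintype.mem_piFinset.1 hA u))).trans
        (G.card_neighborFinset_eq_degree u).le]
  refine sum_congr rfl fun s hs => ?_
  have hfiber : {A ∈ Fintype.piFinset fun u => (G.neighborFinset u).powerset |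
      (fun u => #(A u)) = s} = selections G s := by
    ext A
    simp only [mem_filter, Fintype.mem_piFinset, mem_powerset, mem_selections, funext_iff]
    exact ⟨fun h u => ⟨h.1 u, h.2 u⟩, fun h => ⟨fun u => (h u).1, fun u => (h u).2⟩⟩
  have hcard : (#(selections G s) : ℝ) ≠ 0 := by
    rw [card_selections]
    exact_mod_cast (prod_pos fun u _ => Nat.choose_pos (le_degree_of_mem_sizeVectors hs u)).ne'
  have hweight : sizeWeight G k s = (∏ u, expKOutProb G k u ^ s u *
      (1 - expKOutProb G k u) ^ (G.degree u - s u)) * #(selections G s) := by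
    simp only [sizeWeight, binomWeight, card_selections, Nat.cast_prod, prod_mul_distrib]
  rw [hfiber, hweight, avgInterComp, mul_assoc, mul_div_cancel₀ _ hcard, mul_sum]
  refine sum_congr rfl fun A hA => ?_
  simp only [(mem_selections.1 hA _).2]

theorem sum_sizeWeight_filter_exists_le (k : ℕ) (E : V → ℕ → Prop)
    [∀ u, DecidablePred (E u)] {ε : ℝ}
    (hE : ∀ u, ∑ j ∈ range (G.degree u + 1) with E u j,
      binomWeight (G.degree u) (expKOutProb G k u) j ≤ ε) :
    ∑ s ∈ sizeVectors G with ∃ u, E u (s u), sizeWeight G k s ≤ Fintype.card V * ε :=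
  calc _ ≤ ∑ u, ∑ j ∈ range (G.degree u + 1) with E u j,
          binomWeight (G.degree u) (expKOutProb G k u) j :=
        sum_piFinset_filter_exists_prod_le (fun u j _ =>
          binomWeight_nonneg (expKOutProb_nonneg k u) (expKOutProb_le_one k u) j)
          (fun u => sum_binomWeight _ _) E
    _ ≤ ∑ _u : V, ε := sum_le_sum fun u _ => hE u
    _ = Fintype.card V * ε := by rw [sum_const, card_univ, nsmul_eq_mul]

theorem expKOutExpect_le_kOutExpect_half_add (k : ℕ) :
    expKOutExpect G k ≤ kOutExpect G (k / 2) +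
      Fintype.card V * Real.exp (-(k : ℝ) / 8) * (Fintype.card V).choose 2 := by
  rw [expKOutExpect_eq_sum_sizeWeight_mul, kOutExpect_eq_avgInterComp]
  refine sum_mul_le_add_mul_of_le_outside (fun s => ∃ u, s u < min (k / 2) (G.degree u))
    (fun s _ => sizeWeight_nonneg k s) (sum_sizeWeight k) (avgInterComp_nonneg _)
    (fun s _ => avgInterComp_le_choose s)
    (fun s hs hgood => avgInterComp_anti (fun u => not_lt.1 (not_exists.1 hgood u))
      (le_degree_of_mem_sizeVectors hs))
    ?_ (Nat.cast_nonneg _)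
  exact sum_sizeWeight_filter_exists_le k _ fun u => sum_binomWeight_lower_tail_le _ k

theorem kOutExpect_two_mul_sub_le_expKOutExpect (k : ℕ) :
    kOutExpect G (2 * k) -
        Fintype.card V * Real.exp (-(k : ℝ) / 3) * (Fintype.card V).choose 2 ≤
      expKOutExpect G k := by
  rw [expKOutExpect_eq_sum_sizeWeight_mul, kOutExpect_eq_avgInterComp]
  refine sub_mul_le_sum_mul_of_le_outside (fun s => ∃ u, min (2 * k) (G.degree u) < s u)
    (fun s _ => sizeWeight_nonneg k s) (sum_sizeWeight k) (avgInterComp_le_choose _)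
    (fun s _ => avgInterComp_nonneg s)
    (fun s _ hgood => avgInterComp_anti (fun u => not_lt.1 (not_exists.1 hgood u))
      fun u => min_le_right _ _)
    ?_ (Nat.cast_nonneg _)
  exact sum_sizeWeight_filter_exists_le k _ fun u => sum_binomWeight_upper_tail_le _ k

end SizeVectors

theorem expKOut_sandwiched_between_kOut_general
    (n k : ℕ) (V : Type) [Fintype V] [DecidableEq V]
    (G : SimpleGraph V) [DecidableRel G.Adj]
    (hcard : Fintype.card V = n)
    (p D : ℝ)
    (hp : p = n * (Real.exp (-(k : ℝ) / 3) + Real.exp (-(k : ℝ) / 8)))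
    (hp1 : p < 1)
    (hD : D = p / (1 - p) * (n.choose 2 : ℝ)) :
    kOutExpect G (2 * k) - D ≤ expKOutExpect G k ∧
      expKOutExpect G k ≤ kOutExpect G (k / 2) + D := by
  have hlower := kOutExpect_two_mul_sub_le_expKOutExpect (G := G) k
  have hupper := expKOutExpect_le_kOutExpect_half_add (G := G) k
  rw [hcard] at hlower hupper
  have hp0 : 0 ≤ p := by rw [hp]; positivity
  have hpD : p ≤ p / (1 - p) := le_div_self hp0 (by linarith) (by linarith)
  have hle_D : ∀ x, x ≤ p → x * (n.choose 2 : ℝ) ≤ D := fun x hx => by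
    rw [hD]
    exact mul_le_mul_of_nonneg_right (hx.trans hpD) (Nat.cast_nonneg _)
  have h3 := hle_D (n * Real.exp (-(k : ℝ) / 3)) (by
    rw [hp]; gcongr; exact le_add_of_nonneg_right (Real.exp_pos _).le)
  have h8 := hle_D (n * Real.exp (-(k : ℝ) / 8)) (by
    rw [hp]; gcongr; exact le_add_of_nonneg_left (Real.exp_pos _).le)
  constructor <;> linarith

/-- For an `n`-vertex graph `G` and an even integer `k ≥ 2`, with
`p = n·(e^{-k/3} + e^{-k/8}) < 1` and `D = (p/(1-p))·C(n,2)`, the expected number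
of inter-component edges in the expected `k`-out model is sandwiched, up to `D`,
between those of the exact `2k`-out and exact `k/2`-out models. -/
theorem expKOut_sandwiched_between_kOut
    (n k : ℕ) (V : Type) [Fintype V] [DecidableEq V]
    (G : SimpleGraph V) [DecidableRel G.Adj]
    (hn : 2 ≤ n) (hcard : Fintype.card V = n) (hk : 2 ≤ k) (hke : Even k)
    (p D : ℝ)
    (hp : p = n * (Real.exp (-(k : ℝ) / 3) + Real.exp (-(k : ℝ) / 8)))
    (hp1 : p < 1)
    (hD : D = p / (1 - p) * (n.choose 2 : ℝ)) :
    kOutExpect G (2 * k) - D ≤ expKOutExpect G k ∧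
      expKOutExpect G k ≤ kOutExpect G (k / 2) + D :=
  expKOut_sandwiched_between_kOut_general n k V G hcard p D hp hp1 hD
end

section
/- Let k ≥ 2 and n be integers with n ≥ 3k, n even, and k dividing n. Let G be the simple graph on n vertices consisting of two disjoint complete graphs A and B, each on n/2 vertices, together with a matching of n/k edges joining n/k distinct vertices of A to n/k distinct vertices of B. If G' is a random k-out subgraph of G, then the probability that no matching edge belongs to G' is at least 3^(−6); consequently, the expected number of inter-component edges of G with respect to G' is at least 3^(−6)·n/k. -/
/-!
Put `m = n / 2` and `t = n / k`, so that `k / m = 2 / t`. A vertex avoids a given neighbour with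
probability `1 - k / deg`, independently of the other vertices, and each of the `2 t` matched
vertices has degree at least `m`; hence no matching edge is chosen with probability at least
`(1 - 2 / t) ^ (2 t) ≥ 3⁻⁶`, with equality at `t = 3`. On that event every edge of `G'` stays
inside one of the two cliques, so each of the `t` matching edges is inter-component.
-/

open Finset

variable {V : Type*}

section KOut

variable [Fintype V] [DecidableEq V] {G : SimpleGraph V} [DecidableRel G.Adj] {k : ℕ}

theorem kOutGraph_adj (ω : kOutSpace G k) (u v : V) :
    (kOutGraph G k ω).Adj u v ↔ u ≠ v ∧ (v ∈ (ω u).1 ∨ u ∈ (ω v).1) :=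
  SimpleGraph.fromRel_adj _ _ _

theorem notMem_kOutChoice_self {v : V} (c : kOutChoice G k v) : v ∉ c.1 :=
  fun h => G.notMem_neighborFinset_self v (c.2.1 h)

theorem kOutGraph_le (ω : kOutSpace G k) : kOutGraph G k ω ≤ G := by
  intro u v h
  rcases ((kOutGraph_adj ω u v).1 h).2 with h | h
  · exact (G.mem_neighborFinset u v).1 ((ω u).2.1 h)
  · exact ((G.mem_neighborFinset v u).1 ((ω v).2.1 h)).symm

theorem forall_not_adj_kOutGraph_iff {p : V → V} (hp : Function.Involutive p)
    (ω : kOutSpace G k) :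
    (∀ v, ¬ (kOutGraph G k ω).Adj v (p v)) ↔ ∀ v, p v ∉ (ω v).1 := by
  simp only [kOutGraph_adj, not_and, not_or]
  refine ⟨fun h v hv => ?_, fun h v _ => ⟨h v, by simpa [hp v] using h (p v)⟩⟩
  exact (h v fun hpv => notMem_kOutChoice_self (ω v) (by rwa [← hpv] at hv)).1 hv

theorem ncard_kOutSpace_forall (P : ∀ v, kOutChoice G k v → Prop) :
    {ω : kOutSpace G k | ∀ v, P v (ω v)}.ncard = ∏ v, Nat.card {c // P v c} := by
  rw [← Nat.card_coe_set_eq]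
  exact (Nat.card_congr Equiv.subtypePiEquivPi).trans Nat.card_pi

theorem card_kOutChoice (v : V) :
    Nat.card (kOutChoice G k v) = (G.degree v).choose (min k (G.degree v)) :=
  calc Nat.card (kOutChoice G k v)
      = #((G.neighborFinset v).powersetCard (min k (G.degree v))) := by
        rw [← Nat.card_eq_finsetCard]
        exact Nat.card_congr (Equiv.subtypeEquivRight fun A => by rw [mem_powersetCard])
    _ = _ := by rw [card_powersetCard, G.card_neighborFinset_eq_degree]

theorem card_kOutChoice_notMem {v x : V} (hx : G.Adj v x) :
    Nat.card {c : kOutChoice G k v // x ∉ c.1} = (G.degree v - 1).choose (min k (G.degree v)) :=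
  calc Nat.card {c : kOutChoice G k v // x ∉ c.1}
      = #(((G.neighborFinset v).erase x).powersetCard (min k (G.degree v))) := by
        rw [← Nat.card_eq_finsetCard]
        refine Nat.card_congr ((Equiv.subtypeSubtypeEquivSubtypeInter _ (fun A => x ∉ A)).trans
          (Equiv.subtypeEquivRight fun A => ?_))
        rw [mem_powersetCard, subset_erase]
        tauto
    _ = _ := by
        rw [card_powersetCard, card_erase_of_mem ((G.mem_neighborFinset v x).2 hx),
          G.card_neighborFinset_eq_degree]

theorem card_kOutChoice_notMem_div {v x : V} (hx : G.Adj v x) (hk : k ≤ G.degree v) :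
    (Nat.card {c : kOutChoice G k v // x ∉ c.1} : ℝ) / Nat.card (kOutChoice G k v) =
      1 - k / G.degree v := by
  obtain ⟨d, hd⟩ : ∃ d, G.degree v = d + 1 := Nat.exists_eq_add_one.2 hx.degree_pos_left
  rw [card_kOutChoice_notMem hx, card_kOutChoice, min_eq_left hk, hd, Nat.add_sub_cancel]
  rw [hd] at hk
  have hchoose := Nat.choose_mul_succ_eq d k
  rw [← Nat.cast_inj (R := ℝ)] at hchoose
  push_cast [Nat.cast_sub hk] at hchoose
  have hpos : (0 : ℝ) < (d + 1).choose k := by exact_mod_cast Nat.choose_pos hk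
  field_simp
  push_cast
  linarith

theorem ncard_forall_notMem_div_card_eq_prod (p : V → V) :
    ({ω : kOutSpace G k | ∀ v, p v ∉ (ω v).1}.ncard : ℝ) / Fintype.card (kOutSpace G k) =
      ∏ v, (Nat.card {c : kOutChoice G k v // p v ∉ c.1} : ℝ) / Nat.card (kOutChoice G k v) := by
  rw [ncard_kOutSpace_forall (fun v c => p v ∉ c.1), ← Nat.card_eq_fintype_card, Nat.card_pi]
  push_cast
  exact (prod_div_distrib ..).symm

theorem pow_le_ncard_forall_notMem_div_card {p : V → V} {D : ℕ} (hkD : k ≤ D)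
    (hp : ∀ v, p v ≠ v → G.Adj v (p v) ∧ D ≤ G.degree v) :
    (1 - k / D : ℝ) ^ #{v | p v ≠ v} ≤
      ({ω : kOutSpace G k | ∀ v, p v ∉ (ω v).1}.ncard : ℝ) / Fintype.card (kOutSpace G k) := by
  have hfactor : 0 ≤ (1 - k / D : ℝ) :=
    sub_nonneg.2 (div_le_one_of_le₀ (by exact_mod_cast hkD) (Nat.cast_nonneg D))
  have hpow : (1 - k / D : ℝ) ^ #{v | p v ≠ v} = ∏ v, if p v ≠ v then (1 - k / D : ℝ) else 1 := by
    rw [prod_ite, prod_const, prod_const_one, mul_one]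
  rw [hpow, ncard_forall_notMem_div_card_eq_prod]
  refine prod_le_prod (fun v _ => by split_ifs <;> simp [hfactor]) fun v _ => ?_
  split_ifs with hv
  · obtain ⟨hadj, hD⟩ := hp v hv
    rw [card_kOutChoice_notMem_div hadj (hkD.trans hD), sub_le_sub_iff_left]
    rcases k.eq_zero_or_pos with rfl | hk
    · simp
    · gcongr
      exact_mod_cast hk.trans_le hkD
  · have hcard : (Nat.card (kOutChoice G k v) : ℝ) ≠ 0 := by
      rw [card_kOutChoice]
      exact_mod_cast (Nat.choose_pos (min_le_right _ _)).ne'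
    rw [not_not.1 hv, Nat.card_congr (Equiv.subtypeUnivEquiv notMem_kOutChoice_self),
      div_self hcard]

end KOut

theorem ncard_mul_le_sum_div_card {Ω : Type*} [Fintype Ω] {X : Ω → ℝ} (hX : ∀ ω, 0 ≤ X ω)
    {E : Set Ω} {c : ℝ} (hE : ∀ ω ∈ E, c ≤ X ω) :
    (E.ncard : ℝ) / Fintype.card Ω * c ≤ (∑ ω, X ω) / Fintype.card Ω := by
  classical
  rw [div_mul_eq_mul_div, Set.ncard_eq_toFinset_card', ← nsmul_eq_mul, ← sum_const]
  gcongr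
  calc ∑ _ ∈ E.toFinset, c ≤ ∑ ω ∈ E.toFinset, X ω :=
        sum_le_sum fun ω hω => hE ω (Set.mem_toFinset.1 hω)
    _ ≤ ∑ ω, X ω := sum_le_sum_of_subset_of_nonneg (subset_univ _) fun ω _ _ => hX ω

theorem SimpleGraph.Reachable.iff_of_forall_adj {H : SimpleGraph V} {P : V → Prop}
    (hP : ∀ x y, H.Adj x y → (P x ↔ P y)) {u v : V} (h : H.Reachable u v) : P u ↔ P v := by
  obtain ⟨w⟩ := h
  induction w with
  | nil => rfl
  | cons hadj _ ih => exact (hP _ _ hadj).trans ih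

theorem ncard_le_interCompCount [Finite V] {G H : SimpleGraph V} {P : V → Prop}
    (hP : ∀ x y, H.Adj x y → (P x ↔ P y)) {f : V → V} {S : Set V}
    (hS : ∀ u ∈ S, G.Adj u (f u) ∧ P u ∧ ¬ P (f u)) :
    S.ncard ≤ interCompCount G H := by
  have hinj : Set.InjOn (fun u => s(u, f u)) S := by
    intro u hu u' hu' h
    rcases Sym2.eq_iff.1 h with ⟨h, -⟩ | ⟨h, -⟩
    · exact h
    · exact absurd (h ▸ (hS u hu).2.1) (hS u' hu').2.2
  rw [← hinj.ncard_image]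
  refine Set.ncard_le_ncard ?_ (Set.toFinite _)
  rintro _ ⟨u, hu, rfl⟩
  obtain ⟨hadj, hPu, hPf⟩ := hS u hu
  refine ⟨hadj, fun a b hab hreach => ?_⟩
  have := hreach.iff_of_forall_adj hP
  rcases Sym2.eq_iff.1 hab with ⟨rfl, rfl⟩ | ⟨rfl, rfl⟩ <;> tauto

theorem three_zpow_neg_six_le_one_sub_two_div_pow {t : ℕ} (ht : 3 ≤ t) :
    (3 : ℝ) ^ (-6 : ℤ) ≤ (1 - 2 / t) ^ (2 * t) := by
  rcases lt_or_ge t 6 with ht6 | ht6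
  · interval_cases t <;> norm_num
  have ht6' : (6 : ℝ) ≤ t := by exact_mod_cast ht6
  have hpos : (0 : ℝ) < t - 2 := by linarith
  have hexp : Real.exp (-(2 / (t - 2))) ≤ 1 - 2 / t := by
    rw [Real.exp_neg, inv_le_comm₀ (Real.exp_pos _) (by field_simp; linarith)]
    calc (1 - 2 / t : ℝ)⁻¹ = 2 / (t - 2) + 1 := by field_simp; ring
      _ ≤ Real.exp (2 / (t - 2)) := Real.add_one_le_exp _
  calc (3 : ℝ) ^ (-6 : ℤ) ≤ Real.exp (-6) := by
        rw [zpow_neg, Real.exp_neg, show (6 : ℝ) = (6 : ℕ) * 1 by norm_num, Real.exp_nat_mul]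
        gcongr
        exact pow_le_pow_left₀ (Real.exp_pos 1).le Real.exp_one_lt_three.le 6
    _ ≤ Real.exp ((2 * t : ℕ) * -(2 / (t - 2))) := by
        gcongr
        rw [mul_neg, neg_le_neg_iff, mul_div_assoc', div_le_iff₀ hpos]
        push_cast
        linarith
    _ = Real.exp (-(2 / (t - 2))) ^ (2 * t) := Real.exp_nat_mul _ _
    _ ≤ (1 - 2 / t) ^ (2 * t) := by gcongr

section TwoCliques

variable {n m t : ℕ}

def IsTwoCliquesMatching (m t : ℕ) (G : SimpleGraph (Fin n)) : Prop :=
  ∀ u v : Fin n, G.Adj u v ↔ u ≠ v ∧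
    (((u : ℕ) < m ∧ (v : ℕ) < m) ∨ (m ≤ (u : ℕ) ∧ m ≤ (v : ℕ)) ∨
     ((v : ℕ) = (u : ℕ) + m ∧ (u : ℕ) < t) ∨ ((u : ℕ) = (v : ℕ) + m ∧ (v : ℕ) < t))

-- The bound `v + m < n` only makes the definition total: it holds whenever `2 * m = n`, `t ≤ m`.
def matchPartner (m t : ℕ) (v : Fin n) : Fin n :=
  if h : (v : ℕ) < t ∧ (v : ℕ) + m < n then ⟨v + m, h.2⟩
  else if h : m ≤ (v : ℕ) ∧ (v : ℕ) < m + t then ⟨v - m, by omega⟩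
  else v

theorem val_matchPartner (hmn : 2 * m = n) (htm : t ≤ m) (v : Fin n) :
    (matchPartner m t v : ℕ) =
      if (v : ℕ) < t then v + m else if m ≤ (v : ℕ) ∧ (v : ℕ) < m + t then v - m else v := by
  unfold matchPartner
  split_ifs <;> first | rfl | omega

theorem val_matchPartner_of_lt (hmn : 2 * m = n) (htm : t ≤ m) {v : Fin n} (hv : (v : ℕ) < t) :
    (matchPartner m t v : ℕ) = v + m := by
  rw [val_matchPartner hmn htm, if_pos hv]

theorem matchPartner_involutive (hmn : 2 * m = n) (htm : t ≤ m) :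
    Function.Involutive (matchPartner (n := n) m t) := by
  intro v
  ext
  simp only [val_matchPartner hmn htm]
  split_ifs <;> omega

theorem card_matchPartner_ne (hmn : 2 * m = n) (htm : t ≤ m) :
    #{v : Fin n | matchPartner m t v ≠ v} = 2 * t := by
  have hinv := matchPartner_involutive hmn htm
  have hsplit : ({v | matchPartner m t v ≠ v} : Finset (Fin n)) =
      ({v | (v : ℕ) < t} : Finset (Fin n)) ∪
        ({v | (matchPartner m t v : ℕ) < t} : Finset (Fin n)) := by
    ext v
    simp only [mem_filter, mem_univ, true_and, mem_union, ne_eq, Fin.ext_iff,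
      val_matchPartner hmn htm]
    split_ifs <;> omega
  have hdisj : Disjoint ({v | (v : ℕ) < t} : Finset (Fin n))
      ({v | (matchPartner m t v : ℕ) < t} : Finset (Fin n)) :=
    disjoint_filter.2 fun v _ hv => by rw [val_matchPartner_of_lt hmn htm hv]; omega
  have hmap : ({v | (matchPartner m t v : ℕ) < t} : Finset (Fin n)) =
      ({v | (v : ℕ) < t} : Finset (Fin n)).map (hinv.toPerm _).toEmbedding := by
    ext v
    simp [mem_map_equiv, Function.Involutive.toPerm_symm]
  rw [hsplit, card_union_of_disjoint hdisj, hmap, card_map, Fin.card_filter_val_lt]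
  omega

theorem matchPartner_ne_iff (hmn : 2 * m = n) (htm : t ≤ m) {v : Fin n} :
    matchPartner m t v ≠ v ↔ (v : ℕ) < t ∨ (m ≤ (v : ℕ) ∧ (v : ℕ) < m + t) := by
  rw [ne_eq, Fin.ext_iff, val_matchPartner hmn htm]
  split_ifs <;> omega

theorem card_filter_val_lt_iff (hmn : 2 * m = n) (v : Fin n) :
    #{w : Fin n | ((w : ℕ) < m ↔ (v : ℕ) < m)} = m := by
  have hlt : #{w : Fin n | (w : ℕ) < m} = m := by rw [Fin.card_filter_val_lt]; omega
  by_cases hv : (v : ℕ) < m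
  · simpa [hv] using hlt
  · have := card_filter_add_card_filter_not (s := univ) fun w : Fin n => (w : ℕ) < m
    simp only [card_univ, Fintype.card_fin] at this
    simp only [hv, iff_false]
    omega

theorem forall_not_adj_iff_forall_not_adj_matchPartner (hmn : 2 * m = n) (htm : t ≤ m)
    (H : SimpleGraph (Fin n)) :
    (∀ u v : Fin n, (v : ℕ) = u + m → (u : ℕ) < t → ¬ H.Adj u v) ↔
      ∀ v, ¬ H.Adj v (matchPartner m t v) := by
  constructor
  · intro h v hadj
    have hv := val_matchPartner hmn htm v
    split_ifs at hv with h₁ h₂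
    · exact h v _ hv h₁ hadj
    · exact h _ v (by omega) (by omega) hadj.symm
    · exact hadj.ne (Fin.ext hv).symm
  · intro h u v huv hu
    obtain rfl : matchPartner m t u = v :=
      Fin.ext ((val_matchPartner_of_lt hmn htm hu).trans huv.symm)
    exact h u

namespace IsTwoCliquesMatching

variable {G : SimpleGraph (Fin n)}

theorem adj_matchPartner (hG : IsTwoCliquesMatching m t G) (hmn : 2 * m = n) (htm : t ≤ m)
    {v : Fin n} (hv : matchPartner m t v ≠ v) : G.Adj v (matchPartner m t v) := by
  have h := val_matchPartner hmn htm v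
  have hv' := (matchPartner_ne_iff hmn htm).1 hv
  rw [hG]
  refine ⟨hv.symm, ?_⟩
  split_ifs at h <;> omega

theorem le_degree [DecidableRel G.Adj] (hG : IsTwoCliquesMatching m t G) (hmn : 2 * m = n)
    (htm : t ≤ m) {v : Fin n} (hv : matchPartner m t v ≠ v) : m ≤ G.degree v := by
  set S : Finset (Fin n) := {w | ((w : ℕ) < m ↔ (v : ℕ) < m)}
  have hvS : v ∈ S := by simp [S]
  have hv' := (matchPartner_ne_iff hmn htm).1 hv
  have hpv : matchPartner m t v ∉ S.erase v := by
    have h := val_matchPartner hmn htm v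
    simp only [S, mem_erase, mem_filter, mem_univ, true_and, not_and]
    intro _
    split_ifs at h <;> omega
  have hsub : insert (matchPartner m t v) (S.erase v) ⊆ G.neighborFinset v := by
    refine insert_subset ((G.mem_neighborFinset _ _).2 (hG.adj_matchPartner hmn htm hv)) ?_
    intro w hw
    simp only [S, mem_erase, mem_filter, mem_univ, true_and] at hw
    rw [G.mem_neighborFinset, hG]
    omega
  calc m = #(insert (matchPartner m t v) (S.erase v)) := by
        rw [card_insert_of_notMem hpv, card_erase_of_mem hvS, card_filter_val_lt_iff hmn]
        omega
    _ ≤ #(G.neighborFinset v) := card_le_card hsub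
    _ = G.degree v := G.card_neighborFinset_eq_degree v

theorem lt_iff_lt_of_adj (hG : IsTwoCliquesMatching m t G) {H : SimpleGraph (Fin n)}
    (hHG : H ≤ G) (hH : ∀ u v : Fin n, (v : ℕ) = u + m → (u : ℕ) < t → ¬ H.Adj u v)
    {x y : Fin n} (h : H.Adj x y) : (x : ℕ) < m ↔ (y : ℕ) < m := by
  rcases ((hG x y).1 (hHG h)).2 with h' | h' | ⟨h₁, h₂⟩ | ⟨h₁, h₂⟩
  · omega
  · omega
  · exact absurd h (hH x y h₁ h₂)
  · exact absurd h.symm (hH y x h₁ h₂)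

theorem le_interCompCount (hG : IsTwoCliquesMatching m t G) (hmn : 2 * m = n) (htm : t ≤ m)
    {H : SimpleGraph (Fin n)} (hHG : H ≤ G)
    (hH : ∀ u v : Fin n, (v : ℕ) = u + m → (u : ℕ) < t → ¬ H.Adj u v) :
    t ≤ interCompCount G H := by
  have hcard : {u : Fin n | (u : ℕ) < t}.ncard = t := by
    rw [Set.ncard_eq_toFinset_card', Set.toFinset_ofPred, Fin.card_filter_val_lt]
    omega
  rw [← hcard]
  refine ncard_le_interCompCount (P := fun x : Fin n => (x : ℕ) < m) (f := matchPartner m t)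
    (fun x y => hG.lt_iff_lt_of_adj hHG hH) fun u (hu : (u : ℕ) < t) => ?_
  have h := val_matchPartner_of_lt hmn htm hu
  exact ⟨hG.adj_matchPartner hmn htm ((matchPartner_ne_iff hmn htm).2 (Or.inl hu)), by omega,
    by omega⟩

end IsTwoCliquesMatching

end TwoCliques

/-- Let `k ≥ 2`, `n ≥ 3k` with `n` even and `k ∣ n`, and let `G`
be the graph on `Fin n` consisting of two disjoint cliques `A = {u : u < n/2}` and
`B = {u : u ≥ n/2}`, each on `n/2` vertices, joined by the matching
`{u, u + n/2}` for `u < n/k`.  Then a random `k`-out subgraph `G'` of `G`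
contains no matching edge with probability at least `3⁻⁶`, and consequently the
expected number of inter-component edges of `G` w.r.t. `G'` is at least `3⁻⁶·n/k`. -/
theorem kOut_two_cliques_matching_lower_bound
    (n k : ℕ) (hk : 2 ≤ k) (hn : 3 * k ≤ n) (hne : Even n) (hdvd : k ∣ n)
    (G : SimpleGraph (Fin n)) [DecidableRel G.Adj]
    (hG : ∀ u v : Fin n, G.Adj u v ↔ u ≠ v ∧
      (((u : ℕ) < n / 2 ∧ (v : ℕ) < n / 2) ∨
       (n / 2 ≤ (u : ℕ) ∧ n / 2 ≤ (v : ℕ)) ∨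
       ((v : ℕ) = (u : ℕ) + n / 2 ∧ (u : ℕ) < n / k) ∨
       ((u : ℕ) = (v : ℕ) + n / 2 ∧ (v : ℕ) < n / k))) :
    (3 : ℝ) ^ (-6 : ℤ) ≤
      (Set.ncard {ω : kOutSpace G k | ∀ u v : Fin n,
          (v : ℕ) = (u : ℕ) + n / 2 → (u : ℕ) < n / k →
          ¬ (kOutGraph G k ω).Adj u v} : ℝ) /
        (Fintype.card (kOutSpace G k) : ℝ) ∧
      (3 : ℝ) ^ (-6 : ℤ) * n / k ≤ kOutExpect G k := by
  change IsTwoCliquesMatching (n / 2) (n / k) G at hG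
  set m := n / 2
  set t := n / k
  have hmn : 2 * m = n := by obtain ⟨r, rfl⟩ := hne; omega
  have hkt : k * t = n := Nat.mul_div_cancel' hdvd
  have ht : 3 ≤ t := (Nat.le_div_iff_mul_le (by omega)).2 (by linarith)
  have htm : t ≤ m := by nlinarith
  have hkm : k ≤ m := by nlinarith
  have hkt' : (2 / t : ℝ) = k / m := by
    rw [div_eq_div_iff (by positivity) (by norm_cast; omega)]
    exact_mod_cast (by omega : 2 * m = k * t)
  have hprob : (3 : ℝ) ^ (-6 : ℤ) ≤
      ({ω : kOutSpace G k | ∀ u v : Fin n, (v : ℕ) = u + m → (u : ℕ) < t →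
        ¬ (kOutGraph G k ω).Adj u v}.ncard : ℝ) / Fintype.card (kOutSpace G k) := by
    simp_rw [forall_not_adj_iff_forall_not_adj_matchPartner hmn htm,
      forall_not_adj_kOutGraph_iff (matchPartner_involutive hmn htm)]
    calc (3 : ℝ) ^ (-6 : ℤ) ≤ (1 - 2 / t) ^ (2 * t) := three_zpow_neg_six_le_one_sub_two_div_pow ht
      _ = (1 - k / m) ^ #{v | matchPartner m t v ≠ v} := by rw [card_matchPartner_ne hmn htm, hkt']
      _ ≤ _ := pow_le_ncard_forall_notMem_div_card hkm fun v hv =>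
          ⟨hG.adj_matchPartner hmn htm hv, hG.le_degree hmn htm hv⟩
  refine ⟨hprob, ?_⟩
  calc (3 : ℝ) ^ (-6 : ℤ) * n / k = 3 ^ (-6 : ℤ) * t := by
        rw [← hkt]; push_cast; field_simp
    _ ≤ _ := by gcongr
    _ ≤ kOutExpect G k := ncard_mul_le_sum_div_card (fun _ => Nat.cast_nonneg _)
        fun ω hω => by exact_mod_cast hG.le_interCompCount hmn htm (kOutGraph_le ω) hω
end

section
/- For all integers n ≥ 2 and r ≥ 1, setting ℓ = ⌈4·r·log₂ n⌉, there exists a function x from the set of all 2-element subsets of {1,…,n} to (ℤ/2ℤ)^ℓ such that for every nonempty collection A of 2-element subsets of {1,…,n} with |A| ≤ 2r, the sum Σ_{e ∈ A} x(e) is nonzero in (ℤ/2ℤ)^ℓ. In other words, the edges of the complete graph on n vertices admit r-resilient names of length ℓ ≤ ⌈4·r·log₂ n⌉. -/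
open Finset

/-!
Choose the names uniformly at random. For a fixed nonempty set `A` of edges, `x ↦ ∑ e ∈ A, x e`
is a surjective homomorphism, so the sum vanishes for exactly a `1 / |V|` fraction of all
labellings. Fewer than `(C(n,2) + 1) ^ (2r) ≤ n ^ (4r) ≤ 2 ^ ℓ = |V|` sets `A` have to be
avoided, so the union bound leaves a good labelling.
-/

section SumsOverSubsets

variable {E V : Type*} [AddCommGroup V]

def sumOverHom (A : Finset E) : (E → V) →+ V :=
  AddMonoidHom.mk' (fun x => ∑ e ∈ A, x e) fun _ _ => sum_add_distrib

lemma sumOverHom_surjective {A : Finset E} (hA : A.Nonempty) :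
    Function.Surjective (sumOverHom (V := V) A) := by
  classical
  obtain ⟨e₀, he₀⟩ := hA
  exact fun v => ⟨Pi.single e₀ v, by simp [sumOverHom, sum_pi_single', he₀]⟩

variable [Fintype E] [DecidableEq E] [Fintype V] [DecidableEq V]

lemma card_filter_sum_eq_zero_mul_card {A : Finset E} (hA : A.Nonempty) :
    #{x : E → V | ∑ e ∈ A, x e = 0} * Fintype.card V = Fintype.card (E → V) := by
  have hker := (sumOverHom (V := V) A).ker.card_mul_index
  rw [AddSubgroup.index_ker, AddMonoidHom.range_eq_top.2 (sumOverHom_surjective hA),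
    AddSubgroup.card_top] at hker
  simp only [Nat.card_eq_fintype_card] at hker
  rw [← hker, ← Fintype.card_subtype]
  exact congrArg (· * _) (Fintype.card_congr (.refl _))

lemma exists_forall_sum_ne_zero_of_card_lt (𝒜 : Finset (Finset E))
    (h𝒜 : ∀ A ∈ 𝒜, A.Nonempty) (hcard : #𝒜 < Fintype.card V) :
    ∃ x : E → V, ∀ A ∈ 𝒜, ∑ e ∈ A, x e ≠ 0 := by
  by_contra! hbad
  set N := Fintype.card (E → V) / Fintype.card V
  have hN : Fintype.card V * N = Fintype.card (E → V) := by
    obtain ⟨A, hA, -⟩ := hbad 0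
    exact Nat.mul_div_cancel' (Dvd.intro_left _ (card_filter_sum_eq_zero_mul_card (h𝒜 A hA)))
  have hcover :
      (univ : Finset (E → V)) ⊆ 𝒜.biUnion fun A => {x : E → V | ∑ e ∈ A, x e = 0} := by
    intro x _
    obtain ⟨A, hA, hx⟩ := hbad x
    exact mem_biUnion.2 ⟨A, hA, mem_filter.2 ⟨mem_univ x, hx⟩⟩
  have hunion : Fintype.card (E → V) ≤ #𝒜 * N :=
    (card_le_card hcover).trans <| card_biUnion_le_card_mul _ _ _ fun A hA =>
      (Nat.le_div_iff_mul_le Fintype.card_pos).2 (card_filter_sum_eq_zero_mul_card (h𝒜 A hA)).le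
  have hNpos : 0 < N := Nat.pos_of_mul_pos_left (hN ▸ Fintype.card_pos)
  exact (hunion.trans_lt ((Nat.mul_lt_mul_of_pos_right hcard hNpos).trans_eq hN)).false

lemma card_filter_card_le_le_pow (k : ℕ) :
    #{A : Finset E | #A ≤ k} ≤ (Fintype.card E + 1) ^ k := by
  have hsub :
      ({A : Finset E | #A ≤ k} : Finset _) ⊆ (range (k + 1)).biUnion (powersetCard · univ) :=
    fun A hA => mem_biUnion.2 ⟨#A, mem_range.2 (Nat.lt_succ_of_le (mem_filter.1 hA).2),
      mem_powersetCard_univ.2 rfl⟩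
  calc #{A : Finset E | #A ≤ k}
      ≤ ∑ j ∈ range (k + 1), (Fintype.card E).choose j := by
        refine (card_le_card hsub).trans (card_biUnion_le.trans_eq ?_)
        simp [card_powersetCard]
    _ ≤ ∑ j ∈ range (k + 1), Fintype.card E ^ j * 1 ^ (k - j) * k.choose j := by
        refine sum_le_sum fun j hj => ?_
        rw [one_pow, mul_one]
        exact (Nat.choose_le_pow _ j).trans
          (Nat.le_mul_of_pos_right _ (Nat.choose_pos (Nat.lt_succ_iff.1 (mem_range.1 hj))))
    _ = (Fintype.card E + 1) ^ k := (add_pow _ _ _).symm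

lemma exists_forall_sum_ne_zero_of_pow_le (k : ℕ)
    (hk : (Fintype.card E + 1) ^ k ≤ Fintype.card V) :
    ∃ x : E → V, ∀ A : Finset E, A.Nonempty → #A ≤ k → ∑ e ∈ A, x e ≠ 0 := by
  have hlt : #{A : Finset E | A.Nonempty ∧ #A ≤ k} < #{A : Finset E | #A ≤ k} := by
    refine card_lt_card ⟨monotone_filter_right _ fun _ _ hA => hA.2, fun h => ?_⟩
    simpa using h (mem_filter.2 ⟨mem_univ ∅, by simp⟩)
  obtain ⟨x, hx⟩ := exists_forall_sum_ne_zero_of_card_lt _ (fun A hA => (mem_filter.1 hA).2.1)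
    (hlt.trans_le ((card_filter_card_le_le_pow k).trans hk))
  exact ⟨x, fun A hA hAk => hx A (mem_filter.2 ⟨mem_univ A, hA, hAk⟩)⟩

end SumsOverSubsets

lemma pow_le_two_pow_ceil_mul_logb {x : ℝ} (hx : 0 < x) (k : ℕ) :
    x ^ k ≤ 2 ^ ⌈k * Real.logb 2 x⌉₊ := by
  calc x ^ k = (2 : ℝ) ^ (k * Real.logb 2 x) := by
        rw [mul_comm, Real.rpow_mul zero_le_two, Real.rpow_logb two_pos (by norm_num) hx,
          Real.rpow_natCast]
    _ ≤ (2 : ℝ) ^ (⌈k * Real.logb 2 x⌉₊ : ℝ) :=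
        Real.rpow_le_rpow_of_exponent_le one_le_two (Nat.le_ceil _)
    _ = 2 ^ ⌈k * Real.logb 2 x⌉₊ := Real.rpow_natCast _ _

theorem resilient_names_exist_general (n r : ℕ) (hn : 2 ≤ n) :
    ∃ x : {s : Finset (Fin n) // s.card = 2} →
        (Fin ⌈4 * (r : ℝ) * Real.logb 2 n⌉₊ → ZMod 2),
      ∀ A : Finset {s : Finset (Fin n) // s.card = 2},
        A.Nonempty → A.card ≤ 2 * r → ∑ e ∈ A, x e ≠ 0 := by
  refine exists_forall_sum_ne_zero_of_pow_le (2 * r) ?_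
  have hlog : (n : ℝ) ^ (4 * r) ≤ 2 ^ ⌈4 * (r : ℝ) * Real.logb 2 n⌉₊ := by
    simpa using pow_le_two_pow_ceil_mul_logb (x := n) (by positivity) (4 * r)
  calc (Fintype.card {s : Finset (Fin n) // s.card = 2} + 1) ^ (2 * r)
      = (n.choose 2 + 1) ^ (2 * r) := by rw [Fintype.card_finset_len, Fintype.card_fin]
    _ ≤ (n ^ 2) ^ (2 * r) := Nat.pow_le_pow_left (Nat.choose_lt_pow (by omega) le_rfl) _
    _ = n ^ (4 * r) := by ring
    _ ≤ 2 ^ ⌈4 * (r : ℝ) * Real.logb 2 n⌉₊ := by exact_mod_cast hlog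
    _ = Fintype.card (Fin ⌈4 * (r : ℝ) * Real.logb 2 n⌉₊ → ZMod 2) := by simp

/-- **existence of resilient edge names.** For all `n ≥ 2` and
`r ≥ 1`, with `ℓ = ⌈4·r·log₂ n⌉`, the edges of the complete graph on `n`
vertices (i.e. the 2-element subsets of `Fin n`) admit names in `(ℤ/2ℤ)^ℓ` such
that the sum of the names over any nonempty collection of at most `2r` edges is
nonzero. -/
theorem resilient_names_exist (n r : ℕ) (hn : 2 ≤ n) (hr : 1 ≤ r) :
    ∃ x : {s : Finset (Fin n) // s.card = 2} →
        (Fin ⌈4 * (r : ℝ) * Real.logb 2 n⌉₊ → ZMod 2),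
      ∀ A : Finset {s : Finset (Fin n) // s.card = 2},
        A.Nonempty → A.card ≤ 2 * r → ∑ e ∈ A, x e ≠ 0 :=
  resilient_names_exist_general n r hn
end

section
/- Let C > 0 and k > 0 be real numbers with C²·k ≥ 40, let ℓ ≥ 0 be an integer, and let y be a real number with y ≥ k/(10·2^ℓ). Then 2^ℓ · exp(−C·2^ℓ·√y) ≤ exp(−C·√(k/10)). -/
/-- For reals `C, k > 0` with `C²·k ≥ 40`, an integer `ℓ ≥ 0`
and a real `y ≥ k/(10·2^ℓ)`, we have
`2^ℓ · exp(−C·2^ℓ·√y) ≤ exp(−C·√(k/10))`. -/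
theorem pow_mul_exp_le_exp (C k : ℝ) (hC : 0 < C) (hk : 0 < k)
    (h40 : 40 ≤ C ^ 2 * k) (ℓ : ℕ) (y : ℝ) (hy : k / (10 * 2 ^ ℓ) ≤ y) :
    (2 : ℝ) ^ ℓ * Real.exp (-C * 2 ^ ℓ * Real.sqrt y) ≤
      Real.exp (-C * Real.sqrt (k / 10)) := by
  set s : ℝ := Real.sqrt (k / 10) with hs
  set t : ℝ := Real.sqrt ((2 : ℝ) ^ ℓ) with ht
  have hpow : (0 : ℝ) < (2 : ℝ) ^ ℓ := by positivity
  have ht2 : t ^ 2 = (2 : ℝ) ^ ℓ := Real.sq_sqrt hpow.le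
  have ht1 : (1 : ℝ) ≤ t := by
    rw [ht]
    have : (1 : ℝ) = Real.sqrt 1 := (Real.sqrt_one).symm
    rw [this]
    exact Real.sqrt_le_sqrt (one_le_pow₀ (by norm_num))
  have htpos : (0 : ℝ) < t := lt_of_lt_of_le one_pos ht1
  set a : ℝ := C * s with ha
  have hs2 : s ^ 2 = k / 10 := Real.sq_sqrt (by positivity)
  have ha2 : (4 : ℝ) ≤ a ^ 2 := by
    have : a ^ 2 = C ^ 2 * (k / 10) := by rw [ha, mul_pow, hs2]
    rw [this]; linarith
  have hanneg : 0 ≤ a := by positivity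
  have hage2 : (2 : ℝ) ≤ a := by nlinarith
  -- √y ≥ s / t
  have hsy : s / t ≤ Real.sqrt y := by
    have h1 : k / (10 * 2 ^ ℓ) = (k / 10) / (2 : ℝ) ^ ℓ := by ring
    have h2 : Real.sqrt (k / (10 * 2 ^ ℓ)) = s / t := by
      rw [h1, Real.sqrt_div (by positivity)]
    rw [← h2]
    exact Real.sqrt_le_sqrt hy
  -- 2^ℓ * √y ≥ t * s
  have hmain : t * s ≤ (2 : ℝ) ^ ℓ * Real.sqrt y := by
    have h3 : (2 : ℝ) ^ ℓ * (s / t) = t * s := by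
      rw [← ht2]; field_simp
    calc t * s = (2 : ℝ) ^ ℓ * (s / t) := h3.symm
      _ ≤ (2 : ℝ) ^ ℓ * Real.sqrt y := by
          exact mul_le_mul_of_nonneg_left hsy hpow.le
  have hexp1 : Real.exp (-C * 2 ^ ℓ * Real.sqrt y) ≤ Real.exp (-(a * t)) := by
    apply Real.exp_le_exp.mpr
    have : a * t = C * (t * s) := by ring
    nlinarith [mul_le_mul_of_nonneg_left hmain hC.le]
  -- t² ≤ exp (a * (t - 1))
  have hlog : Real.log t ≤ t - 1 := Real.log_le_sub_one_of_pos htpos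
  have ht2exp : (2 : ℝ) ^ ℓ ≤ Real.exp (a * (t - 1)) := by
    rw [← ht2]
    have hp : (0:ℝ) < t ^ 2 := by positivity
    rw [← Real.exp_log hp, Real.log_pow]
    apply Real.exp_le_exp.mpr
    push_cast
    nlinarith [sub_nonneg.mpr ht1]
  calc (2 : ℝ) ^ ℓ * Real.exp (-C * 2 ^ ℓ * Real.sqrt y)
      ≤ Real.exp (a * (t - 1)) * Real.exp (-(a * t)) := by
        apply mul_le_mul ht2exp hexp1 (Real.exp_pos _).le (Real.exp_pos _).le
    _ = Real.exp (-a) := by rw [← Real.exp_add]; ring_nf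
    _ = Real.exp (-C * s) := by rw [ha]; ring_nf
end

section
/- Let C ≥ 6 be a real number, let ℓ' and ℓ be integers with 0 ≤ ℓ' ≤ ℓ, and let a, b, d, d' be positive real numbers with b ≤ a, d ≤ d', and d ≤ 2b. Then 2^ℓ · a² · exp(−C · 2^ℓ · √(a/d)) ≤ 2^(ℓ') · b² · exp(−C · 2^(ℓ') · √(b/d')). -/
/-!
Write `s = 2^ℓ`, `s' = 2^ℓ'`, `x = √(a/d)`, `y = √(b/d')`. The claim is
`(s/s')·(a/b)² ≤ exp(C(s-s')x)·exp(Cs'(x-y))`, and the two factors are compared separately.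
Since `x ≥ 1/2`, the level ratio obeys `s/s' ≤ exp(s/s' - 1) ≤ exp(C(s-s')x)`.
For the size ratio, `(a/b)² = (√a/√b)⁴ ≤ exp(4(√a/√b - 1))`, while `d ≤ d'` and `d ≤ 2b` give
`x - y ≥ (√a - √b)/√d ≥ (√a - √b)/(√2·√b)`, and `4√2 ≤ 6 ≤ Cs'`.
-/

open Real

lemma le_mul_exp_mul_sub {s s' κ : ℝ} (hs' : 1 ≤ s') (hs's : s' ≤ s) (hκ : 1 ≤ κ) :
    s ≤ s' * exp (κ * (s - s')) := by
  have hs'0 : 0 < s' := by linarith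
  have hratio : s / s' ≤ exp (s / s' - 1) := by simpa using add_one_le_exp (s / s' - 1)
  have hexponent : s / s' - 1 ≤ κ * (s - s') := by
    rw [div_sub_one hs'0.ne', div_le_iff₀ hs'0]
    nlinarith [mul_le_mul hκ hs' zero_le_one (by linarith : (0 : ℝ) ≤ κ)]
  calc s = s' * (s / s') := by field_simp
    _ ≤ s' * exp (κ * (s - s')) := by gcongr; exact hratio.trans (exp_le_exp.2 hexponent)

lemma sq_le_sq_mul_exp_sqrt_div_sqrt {a b : ℝ} (ha : 0 ≤ a) (hb : 0 < b) :
    a ^ 2 ≤ b ^ 2 * exp (4 * (√a / √b - 1)) := by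
  set t := √a / √b
  have ht : 0 ≤ t := by positivity
  have hpow : b ^ 2 * t ^ 4 = a ^ 2 := by
    rw [div_pow, show (4 : ℕ) = 2 * 2 from rfl, pow_mul, pow_mul, sq_sqrt ha, sq_sqrt hb.le]
    field_simp
  calc a ^ 2 = b ^ 2 * t ^ 4 := hpow.symm
    _ ≤ b ^ 2 * exp (t - 1) ^ 4 := by
      gcongr; simpa using add_one_le_exp (t - 1)
    _ = b ^ 2 * exp (4 * (t - 1)) := by rw [← exp_nat_mul]; norm_num

lemma four_mul_sqrt_div_sqrt_sub_one_le {a b d d' c : ℝ} (hb : 0 < b) (hd : 0 < d)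
    (hba : b ≤ a) (hdd' : d ≤ d') (hd2b : d ≤ 2 * b) (hc : 6 ≤ c) :
    4 * (√a / √b - 1) ≤ c * (√(a / d) - √(b / d')) := by
  have hsb : 0 < √b := sqrt_pos.2 hb
  have hsd : 0 < √d := sqrt_pos.2 hd
  have hgap : 0 ≤ √a - √b := sub_nonneg.2 (sqrt_le_sqrt hba)
  have hy : √(b / d') ≤ √b / √d := by
    rw [← sqrt_div' b hd.le]
    exact sqrt_le_sqrt (div_le_div_of_nonneg_left hb.le hd hdd')
  -- `(4√d)² = 16 d ≤ 32 b ≤ 36 b = (6√b)²`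
  have hroots : 4 * √d ≤ 6 * √b := by nlinarith [sq_sqrt hd.le, sq_sqrt hb.le]
  calc 4 * (√a / √b - 1) = (√a - √b) * (4 / √b) := by field_simp
    _ ≤ (√a - √b) * (c / √d) :=
      mul_le_mul_of_nonneg_left (by rw [div_le_div_iff₀ hsb hsd]; nlinarith) hgap
    _ = c * (√a / √d - √b / √d) := by ring
    _ ≤ c * (√(a / d) - √(b / d')) := by
      rw [sqrt_div' a hd.le]; gcongr

theorem nested_component_cost_bound_general (C : ℝ) (hC : 6 ≤ C)
    (ℓ' ℓ : ℤ) (hℓ' : 0 ≤ ℓ') (hℓ : ℓ' ≤ ℓ)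
    (a b d d' : ℝ) (ha : 0 < a) (hb : 0 < b) (hd : 0 < d)
    (hba : b ≤ a) (hdd' : d ≤ d') (hd2b : d ≤ 2 * b) :
    (2 : ℝ) ^ ℓ * a ^ 2 * Real.exp (-C * 2 ^ ℓ * Real.sqrt (a / d)) ≤
      (2 : ℝ) ^ ℓ' * b ^ 2 * Real.exp (-C * 2 ^ ℓ' * Real.sqrt (b / d')) := by
  set s := (2 : ℝ) ^ ℓ
  set s' := (2 : ℝ) ^ ℓ'
  set x := √(a / d)
  set y := √(b / d')
  have hs' : 1 ≤ s' := one_le_zpow₀ one_le_two hℓ'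
  have hs's : s' ≤ s := zpow_le_zpow_right₀ one_le_two hℓ
  have hx : 1 / 2 ≤ x := le_sqrt_of_sq_le (by rw [le_div_iff₀ hd]; linarith)
  have hlevel : s ≤ s' * exp (C * x * (s - s')) :=
    le_mul_exp_mul_sub hs' hs's (by nlinarith)
  have hsize : a ^ 2 ≤ b ^ 2 * exp (C * s' * (x - y)) :=
    (sq_le_sq_mul_exp_sqrt_div_sqrt ha.le hb).trans <| by
      gcongr ?_ * exp ?_
      exact four_mul_sqrt_div_sqrt_sub_one_le hb hd hba hdd' hd2b (by nlinarith)
  calc s * a ^ 2 * exp (-C * s * x)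
      ≤ (s' * exp (C * x * (s - s'))) * (b ^ 2 * exp (C * s' * (x - y))) * exp (-C * s * x) := by
        gcongr
    _ = s' * b ^ 2 * exp (-C * s' * y) := by
        rw [show -C * s' * y = C * x * (s - s') + C * s' * (x - y) + -C * s * x by ring,
          exp_add, exp_add]
        ring

/-- For a real `C ≥ 6`, integers `0 ≤ ℓ' ≤ ℓ` and positive
reals `a, b, d, d'` with `b ≤ a`, `d ≤ d'` and `d ≤ 2b`, we have
`2^ℓ·a²·exp(−C·2^ℓ·√(a/d)) ≤ 2^{ℓ'}·b²·exp(−C·2^{ℓ'}·√(b/d'))`. -/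
theorem nested_component_cost_bound (C : ℝ) (hC : 6 ≤ C)
    (ℓ' ℓ : ℤ) (hℓ' : 0 ≤ ℓ') (hℓ : ℓ' ≤ ℓ)
    (a b d d' : ℝ) (ha : 0 < a) (hb : 0 < b) (hd : 0 < d) (hd' : 0 < d')
    (hba : b ≤ a) (hdd' : d ≤ d') (hd2b : d ≤ 2 * b) :
    (2 : ℝ) ^ ℓ * a ^ 2 * Real.exp (-C * 2 ^ ℓ * Real.sqrt (a / d)) ≤
      (2 : ℝ) ^ ℓ' * b ^ 2 * Real.exp (-C * 2 ^ ℓ' * Real.sqrt (b / d')) :=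
  nested_component_cost_bound_general C hC ℓ' ℓ hℓ' hℓ a b d d' ha hb hd hba hdd' hd2b
end
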